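/- In the braid group B₃ = ⟨a, b ∣ aba = bab⟩, let w = a^{−n₁}b^{m₁}⋯a^{−n_j}b^{m_j} be a proper alternating word (j ≥ 1 and nᵢ, mᵢ ≥ 1 for all i), and let w' = a^{−m_j}b^{n_j}⋯a^{−m₁}b^{n₁} be the proper alternating word obtained by reversing the order of the syllable pairs and exchanging the roles of the two exponent sequences. Then for every integer k, the inverse of (ab)^{3k}·w is conjugate in B₃ to (ab)^{−3k}·w'. In particular, inversion carries the Murasugi class Ω₆ = {(ab)^{3k}w : k ∈ ℤ, w a proper alternating word} into itself up to conjugacy. -/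

import Mathlib

/-- The single braid relation `aba = bab` of the braid group `B₃`,
recorded as the element `aba(bab)⁻¹` of the free group on two generators. -/
def braidRels : Set (FreeGroup (Fin 2)) :=
  {FreeGroup.of 0 * FreeGroup.of 1 * FreeGroup.of 0 *
    (FreeGroup.of 1 * FreeGroup.of 0 * FreeGroup.of 1)⁻¹}

/-- The braid group `B₃ = ⟨a, b ∣ aba = bab⟩`. -/
abbrev B₃ : Type := PresentedGroup braidRels

/-- The generator `a` of `B₃`. -/
def braidA : B₃ := PresentedGroup.of 0

/-- The generator `b` of `B₃`. -/
def braidB : B₃ := PresentedGroup.of 1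

/-- The proper alternating word `a^{-n₁}b^{m₁}⋯a^{-n_j}b^{m_j}` in `B₃`
associated to a list of pairs of positive integers `[(n₁,m₁),…,(n_j,m_j)]`. -/
def altWord (L : List (ℕ+ × ℕ+)) : B₃ :=
  (L.map fun p => braidA ^ (-(p.1 : ℤ)) * braidB ^ ((p.2 : ℕ) : ℤ)).prod

/-! Conjugation by the Garside element `Δ = aba` exchanges `a` and `b`, so it carries
`w⁻¹ = b^{-m_j}a^{n_j}⋯b^{-m₁}a^{n₁}` to `w' = a^{-m_j}b^{n_j}⋯a^{-m₁}b^{n₁}`; and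
`(ab)³ = Δ²` is central, so the factor `(ab)^{3k}` is untouched by the conjugation. -/

lemma braidA_mul_braidB_mul_braidA : braidA * braidB * braidA = braidB * braidA * braidB :=
  mul_inv_eq_one.mp <| PresentedGroup.one_of_mem rfl

def braidDelta : B₃ := braidA * braidB * braidA

lemma braidDelta_mul_braidA : braidDelta * braidA = braidB * braidDelta := by
  rw [braidDelta]
  conv_lhs => rw [braidA_mul_braidB_mul_braidA]
  group

lemma braidDelta_mul_braidB : braidDelta * braidB = braidA * braidDelta := by
  rw [braidDelta]
  conv_rhs => rw [braidA_mul_braidB_mul_braidA]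
  group

lemma conj_braidDelta_braidA_zpow (t : ℤ) : MulAut.conj braidDelta (braidA ^ t) = braidB ^ t := by
  rw [map_zpow, MulAut.conj_apply, braidDelta_mul_braidA, mul_inv_cancel_right]

lemma conj_braidDelta_braidB_zpow (t : ℤ) : MulAut.conj braidDelta (braidB ^ t) = braidA ^ t := by
  rw [map_zpow, MulAut.conj_apply, braidDelta_mul_braidB, mul_inv_cancel_right]

lemma braidA_mul_braidB_pow_three : (braidA * braidB) ^ 3 = braidDelta ^ 2 := by
  rw [pow_three, pow_two, braidDelta]
  nth_rw 2 [braidA_mul_braidB_mul_braidA]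
  simp only [mul_assoc]

lemma braidDelta_sq_mem_center : braidDelta ^ 2 ∈ Subgroup.center B₃ := by
  refine Subgroup.mem_center_iff.mpr fun g => ?_
  refine Subgroup.mem_centralizer_singleton_iff.mp
    (PresentedGroup.generated_by _ (Subgroup.centralizer {braidDelta ^ 2}) (fun j => ?_) g)
  rw [Subgroup.mem_centralizer_singleton_iff, pow_two]
  fin_cases j
  · change braidA * (braidDelta * braidDelta) = braidDelta * braidDelta * braidA
    symm; rw [mul_assoc, braidDelta_mul_braidA, ← mul_assoc, braidDelta_mul_braidB, mul_assoc]
  · change braidB * (braidDelta * braidDelta) = braidDelta * braidDelta * braidB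
    symm; rw [mul_assoc, braidDelta_mul_braidB, ← mul_assoc, braidDelta_mul_braidA, mul_assoc]

lemma conj_braidDelta_altWord_inv (L : List (ℕ+ × ℕ+)) :
    MulAut.conj braidDelta (altWord L)⁻¹ = altWord (L.reverse.map Prod.swap) := by
  simp only [altWord, List.prod_inv_reverse, map_list_prod, List.map_reverse, List.map_map]
  congr 2
  refine List.map_congr_left fun p _ => ?_
  simp only [Function.comp_apply, Prod.fst_swap, Prod.snd_swap, mul_inv_rev, map_mul,
    ← zpow_neg, neg_neg]
  rw [conj_braidDelta_braidA_zpow, conj_braidDelta_braidB_zpow]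

theorem isConj_mul_left_of_mem_center {G : Type*} [Group G] {z x y : G}
    (hz : z ∈ Subgroup.center G) (h : IsConj x y) : IsConj (z * x) (z * y) := by
  obtain ⟨c, rfl⟩ := isConj_iff.mp h
  refine isConj_iff.mpr ⟨c, ?_⟩
  rw [← mul_assoc, Subgroup.mem_center_iff.mp hz c]; group

/-- In `B₃ = ⟨a, b ∣ aba = bab⟩`, if `w = a^{-n₁}b^{m₁}⋯a^{-n_j}b^{m_j}` is a
proper alternating word and `w' = a^{-m_j}b^{n_j}⋯a^{-m₁}b^{n₁}`, then for
every integer `k` the inverse of `(ab)^{3k}·w` is conjugate to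
`(ab)^{-3k}·w'`: inversion carries the Murasugi class `Ω₆` into itself up to
conjugacy. -/
theorem braid_omega6_inv_conj :
    ∀ (L : List (ℕ+ × ℕ+)), L ≠ [] → ∀ k : ℤ,
      IsConj (((braidA * braidB) ^ (3 * k) * altWord L)⁻¹)
        ((braidA * braidB) ^ (-(3 * k)) *
          altWord (L.reverse.map fun p => (p.2, p.1))) := by
  intro L _ k
  have hcentral : (braidA * braidB) ^ (3 * k) ∈ Subgroup.center B₃ := by
    rw [zpow_mul, zpow_ofNat, braidA_mul_braidB_pow_three]
    exact Subgroup.zpow_mem _ braidDelta_sq_mem_center k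
  rw [mul_inv_rev, Subgroup.mem_center_iff.mp (inv_mem hcentral), zpow_neg]
  exact isConj_mul_left_of_mem_center (inv_mem hcentral)
    (isConj_iff.mpr ⟨braidDelta, conj_braidDelta_altWord_inv L⟩)
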